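/- arXiv:1903.07876 — 4 statements merged into one kernel-verified Lean document; each statement's English description precedes it below -/
import Mathlib

section
/- Let F be a nonempty finite set and f : F → ℝ a nonnegative function. Then ∑_{z∈F} f(z)³ ≤ |F|·(‖f‖₁/|F|)³ + 3·‖f‖_∞·∑_{z∈F} (f(z) − ‖f‖₁/|F|)², where ‖f‖₁ = ∑_{z∈F} f(z) and ‖f‖_∞ = max_{z∈F} f(z). -/
/-!
Expanding around the mean `m` and using `∑ (f z - m) = 0`,
`∑ f³ = |F| m³ + ∑ (f z - m)² (3m + (f z - m))`, and `3m + (f z - m) = f z + 2m ≤ 3 ‖f‖_∞`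
because both `f z` and the mean are at most the maximum.
-/

open Finset
open scoped BigOperators

namespace Finset

variable {ι R : Type*}

lemma sum_sub_expect_eq_zero {M : Type*} [AddCommGroup M] [Module ℚ≥0 M]
    (s : Finset ι) (g : ι → M) : ∑ i ∈ s, (g i - 𝔼 j ∈ s, g j) = 0 := by
  rw [sum_sub_distrib, sum_const, card_smul_expect, sub_self]

lemma sum_pow_three_eq_of_sum_sub_eq_zero [CommRing R] {s : Finset ι} {g : ι → R} {c : R}
    (hc : ∑ i ∈ s, (g i - c) = 0) :
    ∑ i ∈ s, g i ^ 3 = #s * c ^ 3 + ∑ i ∈ s, (3 * c * (g i - c) ^ 2 + (g i - c) ^ 3) := by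
  have expand : ∀ i, g i ^ 3 =
      c ^ 3 + 3 * c ^ 2 * (g i - c) + (3 * c * (g i - c) ^ 2 + (g i - c) ^ 3) :=
    fun i => by ring
  simp only [expand, sum_add_distrib, ← mul_sum, hc, sum_const, nsmul_eq_mul]
  ring

lemma three_mul_mul_sq_add_pow_three_le [CommRing R] [LinearOrder R] [IsStrictOrderedRing R]
    {x c M : R} (hx : x ≤ M) (hc : c ≤ M) :
    3 * c * (x - c) ^ 2 + (x - c) ^ 3 ≤ 3 * M * (x - c) ^ 2 := by
  have key : 0 ≤ (x - c) ^ 2 * (3 * M - 2 * c - x) :=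
    mul_nonneg (sq_nonneg _) (by linarith)
  linarith

lemma sum_pow_three_le_of_sum_sub_eq_zero [CommRing R] [LinearOrder R] [IsStrictOrderedRing R]
    {s : Finset ι} {g : ι → R} {c M : R} (hc : ∑ i ∈ s, (g i - c) = 0)
    (hg : ∀ i ∈ s, g i ≤ M) (hcM : c ≤ M) :
    ∑ i ∈ s, g i ^ 3 ≤ #s * c ^ 3 + 3 * M * ∑ i ∈ s, (g i - c) ^ 2 := by
  rw [sum_pow_three_eq_of_sum_sub_eq_zero hc, mul_sum]
  gcongr with i hi
  exact three_mul_mul_sq_add_pow_three_le (hg i hi) hcM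

end Finset

theorem third_moment_n3_general {F : Type*} [Fintype F] [Nonempty F] (f : F → ℝ) :
    ∑ z, (f z) ^ 3 ≤
      (Fintype.card F : ℝ) * ((∑ z, f z) / (Fintype.card F : ℝ)) ^ 3 +
        3 * (Finset.univ.sup' Finset.univ_nonempty f) *
          ∑ z, (f z - (∑ w, f w) / (Fintype.card F : ℝ)) ^ 2 := by
  have hf_le_max : ∀ z ∈ univ, f z ≤ univ.sup' univ_nonempty f := fun z hz => le_sup' f hz
  rw [← Fintype.expect_eq_sum_div_card, ← card_univ]
  exact sum_pow_three_le_of_sum_sub_eq_zero (sum_sub_expect_eq_zero _ _) hf_le_max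
    (expect_le univ_nonempty hf_le_max)

theorem third_moment_n3 {F : Type*} [Fintype F] [Nonempty F] (f : F → ℝ)
    (hf : ∀ z, 0 ≤ f z) :
    ∑ z, (f z) ^ 3 ≤
      (Fintype.card F : ℝ) * ((∑ z, f z) / (Fintype.card F : ℝ)) ^ 3 +
        3 * (Finset.univ.sup' Finset.univ_nonempty f) *
          ∑ z, (f z - (∑ w, f w) / (Fintype.card F : ℝ)) ^ 2 :=
  third_moment_n3_general f
end

section
/- Let F be a nonempty finite set, n ≥ 2 a natural number, and f : F → ℝ nonnegative. Then ∑_{z∈F} f(z)ⁿ ≤ |F|·(‖f‖₁/|F|)ⁿ + (n(n−1)/2)·‖f‖_∞^{n−2}·∑_{z∈F} (f(z) − ‖f‖₁/|F|)². -/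
/-!
Expand `x ↦ x ^ n` to second order around the mean `m` of `f`: on `[0, M]` the second derivative
is at most `n (n - 1) M ^ (n - 2)`, so each `f z ^ n` is bounded by its quadratic Taylor polynomial
at `m` with that curvature. Summing over `F`, the linear terms cancel because the deviations
`f z - m` sum to zero.
-/

open Finset
open scoped BigOperators

lemma pow_add_two_le_quadratic_taylor {a m M : ℝ} (k : ℕ) (ha : 0 ≤ a) (haM : a ≤ M)
    (hm : 0 ≤ m) (hmM : m ≤ M) :
    a ^ (k + 2) ≤ m ^ (k + 2) + (k + 2) * m ^ (k + 1) * (a - m) +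
      ((k + 2) * (k + 1) / 2) * M ^ k * (a - m) ^ 2 := by
  induction k with
  | zero => exact le_of_eq (by push_cast; ring)
  | succ k ih =>
    have hM : 0 ≤ M := ha.trans haM
    -- Multiplying the bound for `k` by `a = m + (a - m)` gives the bound for `k + 1`, up to the
    -- coefficient of `(a - m) ^ 2`, which is controlled using `a ≤ M` and `m ≤ M`.
    have hcoeff : (k + 2) * (k + 1) / 2 * M ^ k * a + (k + 2) * m ^ (k + 1) ≤
        (k + 2) * (k + 1) / 2 * M ^ k * M + (k + 2) * M ^ (k + 1) := by
      gcongr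
    calc a ^ (k + 1 + 2) = a * a ^ (k + 2) := pow_succ' a _
      _ ≤ a * (m ^ (k + 2) + (k + 2) * m ^ (k + 1) * (a - m) +
          ((k + 2) * (k + 1) / 2) * M ^ k * (a - m) ^ 2) := mul_le_mul_of_nonneg_left ih ha
      _ = m ^ (k + 3) + (k + 3) * m ^ (k + 2) * (a - m) +
          ((k + 2) * (k + 1) / 2 * M ^ k * a + (k + 2) * m ^ (k + 1)) * (a - m) ^ 2 := by ring
      _ ≤ m ^ (k + 3) + (k + 3) * m ^ (k + 2) * (a - m) +
          ((k + 2) * (k + 1) / 2 * M ^ k * M + (k + 2) * M ^ (k + 1)) * (a - m) ^ 2 := by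
        gcongr
      _ = _ := by push_cast; ring

lemma Fintype.sum_le_of_le_quadratic_at_expect {ι : Type*} [Fintype ι] (f : ι → ℝ)
    (φ : ℝ → ℝ) (c₁ c₂ : ℝ)
    (h : ∀ i, φ (f i) ≤ φ (𝔼 j, f j) + c₁ * (f i - 𝔼 j, f j) + c₂ * (f i - 𝔼 j, f j) ^ 2) :
    ∑ i, φ (f i) ≤ Fintype.card ι * φ (𝔼 j, f j) + c₂ * ∑ i, (f i - 𝔼 j, f j) ^ 2 := by
  have hdev : ∑ i, (f i - 𝔼 j, f j) = 0 := Fintype.sum_balance f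
  calc ∑ i, φ (f i)
      ≤ ∑ i, (φ (𝔼 j, f j) + c₁ * (f i - 𝔼 j, f j) + c₂ * (f i - 𝔼 j, f j) ^ 2) :=
        sum_le_sum fun i _ ↦ h i
    _ = Fintype.card ι * φ (𝔼 j, f j) + c₁ * ∑ i, (f i - 𝔼 j, f j) +
          c₂ * ∑ i, (f i - 𝔼 j, f j) ^ 2 := by
        simp only [sum_add_distrib, ← mul_sum, sum_const, card_univ, nsmul_eq_mul]
    _ = _ := by rw [hdev, mul_zero, add_zero]

theorem third_moment_general {F : Type*} [Fintype F] [Nonempty F] (n : ℕ) (hn : 2 ≤ n)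
    (f : F → ℝ) (hf : ∀ z, 0 ≤ f z) :
    ∑ z, (f z) ^ n ≤
      (Fintype.card F : ℝ) * ((∑ z, f z) / (Fintype.card F : ℝ)) ^ n +
        ((n * (n - 1) : ℝ) / 2) * (Finset.univ.sup' Finset.univ_nonempty f) ^ (n - 2) *
          ∑ z, (f z - (∑ w, f w) / (Fintype.card F : ℝ)) ^ 2 := by
  obtain ⟨k, rfl⟩ := Nat.exists_eq_add_of_le' hn
  rw [← Fintype.expect_eq_sum_div_card, Nat.add_sub_cancel]
  set M := univ.sup' univ_nonempty f
  have hfM (z : F) : f z ≤ M := le_sup' f (mem_univ z)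
  have hmean : 0 ≤ 𝔼 z, f z := expect_nonneg fun z _ ↦ hf z
  have hmeanM : 𝔼 z, f z ≤ M := expect_le univ_nonempty fun z _ ↦ hfM z
  calc ∑ z, f z ^ (k + 2)
      ≤ Fintype.card F * (𝔼 z, f z) ^ (k + 2) +
          ((k + 2) * (k + 1) / 2 * M ^ k) * ∑ z, (f z - 𝔼 w, f w) ^ 2 :=
        Fintype.sum_le_of_le_quadratic_at_expect f (· ^ (k + 2)) _ _ fun z ↦
          pow_add_two_le_quadratic_taylor k (hf z) (hfM z) hmean hmeanM
    _ = _ := by push_cast; ring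
end

section
/- Let A ⊆ 𝔽_q be nonempty. Then |AA + A| ≫ min{ q, |A|² / q^{1/2} } with an absolute implied constant. In particular, if |A| ≥ q^{3/4}, then |AA + A| ≫ q. -/
/-!
Put `v (a, x, y) = a * x + y` on `T = A × A × A` and let `E` count the pairs of `T` on which `v`
agrees. Cauchy–Schwarz over the fibres of `v` gives `|A|⁶ ≤ |AA + A| · E`. Expanding `q E` by
orthogonality of a primitive additive character `ψ` gives `q E = ∑_b |∑_{t ∈ T} ψ (b v t)|²`; the
term `b = 0` is `|A|⁶`, and for `b ≠ 0` the inner sum factors as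
`(∑_{a, x} ψ (b a x)) (∑_y ψ (b y))`. Cauchy–Schwarz in `a` and Parseval bound the first factor
by `|A|² q`, and Parseval bounds the sum over `b` of the second by `q |A|`. Hence
`q E ≤ |A|⁶ + q² |A|³` and `|AA + A| ≥ q |A|³ / (|A|³ + q²)`, which is at least
`min (q, |A|² / √q) / 2` once `|A| ≥ √q`; for smaller `A` the trivial bound `|AA + A| ≥ |A|`
suffices.
-/

open Finset

section Collisions

variable {ι β : Type*} [DecidableEq β]

def collisionCount (T : Finset ι) (v : ι → β) : ℕ := #{p ∈ T ×ˢ T | v p.1 = v p.2}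

lemma collisionCount_eq_sum_sq (T : Finset ι) (v : ι → β) :
    collisionCount T v = ∑ s ∈ T.image v, #{t ∈ T | v t = s} ^ 2 := by
  rw [collisionCount, card_eq_sum_card_fiberwise (f := fun p => v p.1) (t := T.image v)
    fun p hp => mem_image_of_mem v (mem_product.1 (mem_filter.1 hp).1).1]
  refine sum_congr rfl fun s _ => ?_
  rw [sq, ← card_product]
  congr 1
  ext ⟨t, t'⟩
  simp only [mem_filter, mem_product]
  constructor
  · rintro ⟨⟨⟨ht, ht'⟩, hv⟩, rfl⟩
    exact ⟨⟨ht, rfl⟩, ht', hv.symm⟩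
  · rintro ⟨⟨ht, rfl⟩, ht', hv⟩
    exact ⟨⟨⟨ht, ht'⟩, hv.symm⟩, rfl⟩

lemma card_sq_le_card_image_mul_collisionCount (T : Finset ι) (v : ι → β) :
    #T ^ 2 ≤ #(T.image v) * collisionCount T v := by
  rw [card_eq_sum_card_image v T, collisionCount_eq_sum_sq]
  exact sq_sum_le_card_mul_sum_sq

lemma collisionCount_id (B : Finset β) : collisionCount B id = #B := by
  rw [collisionCount, ← diag_card B]
  congr 1
  ext ⟨x, y⟩
  simp only [mem_filter, mem_product, id, mem_diag]
  constructor
  · rintro ⟨⟨hx, -⟩, rfl⟩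
    exact ⟨hx, rfl⟩
  · rintro ⟨hx, rfl⟩
    exact ⟨⟨hx, hx⟩, rfl⟩

end Collisions

namespace AddChar

variable {R : Type*} [CommRing R] [Fintype R] [DecidableEq R] {ψ : AddChar R ℂ}

lemma sum_norm_sq_sum_mulShift (hψ : ψ.IsPrimitive) {ι : Type*} (T : Finset ι) (v : ι → R) :
    ∑ b, ‖∑ t ∈ T, ψ (b * v t)‖ ^ 2 = Fintype.card R * collisionCount T v := by
  have hb (b : R) : (‖∑ t ∈ T, ψ (b * v t)‖ ^ 2 : ℂ)
      = ∑ p ∈ T ×ˢ T, ψ (b * (v p.1 - v p.2)) := by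
    rw [← Complex.mul_conj', map_sum, sum_mul_sum, sum_product]
    refine sum_congr rfl fun t _ => sum_congr rfl fun t' _ => ?_
    rw [← map_neg_eq_conj, ← map_add_eq_mul, mul_sub, sub_eq_add_neg]
  apply Complex.ofReal_injective
  push_cast
  simp_rw [hb]
  rw [sum_comm, collisionCount, card_filter, Nat.cast_sum, mul_sum]
  refine sum_congr rfl fun p _ => ?_
  rw [sum_mulShift _ hψ]
  split_ifs <;> simp_all [sub_eq_zero]

lemma sum_norm_sq_sum_mulShift_id (hψ : ψ.IsPrimitive) (B : Finset R) :
    ∑ b, ‖∑ x ∈ B, ψ (b * x)‖ ^ 2 = Fintype.card R * #B := by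
  simpa [collisionCount_id] using sum_norm_sq_sum_mulShift hψ B id

lemma norm_sq_sum_sum_mulShift_le (hψ : ψ.IsPrimitive) {b : R} (hb : IsUnit b)
    (A B : Finset R) :
    ‖∑ a ∈ A, ∑ x ∈ B, ψ (b * (a * x))‖ ^ 2 ≤ #A * (Fintype.card R * #B) := by
  set g : R → ℂ := fun c => ∑ x ∈ B, ψ (c * x)
  have hg : ∀ a, ∑ x ∈ B, ψ (b * (a * x)) = g (b * a) := fun a => by simp only [g, mul_assoc]
  simp_rw [hg]
  calc ‖∑ a ∈ A, g (b * a)‖ ^ 2 ≤ (∑ a ∈ A, ‖g (b * a)‖) ^ 2 := by gcongr; exact norm_sum_le _ _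
    _ ≤ #A * ∑ a ∈ A, ‖g (b * a)‖ ^ 2 := sq_sum_le_card_mul_sum_sq
    _ ≤ #A * ∑ c, ‖g c‖ ^ 2 := by
      gcongr
      rw [← sum_image (f := fun c => ‖g c‖ ^ 2) fun x _ y _ h => hb.mul_right_injective h]
      exact sum_le_sum_of_subset_of_nonneg (subset_univ _) fun _ _ _ => by positivity
    _ = #A * (Fintype.card R * #B) := by rw [sum_norm_sq_sum_mulShift_id hψ]

end AddChar

section FiniteField

variable {F : Type*} [Field F] [Fintype F] [DecidableEq F]

lemma card_mul_collisionCount_le (A B C : Finset F) :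
    Fintype.card F * collisionCount (A ×ˢ B ×ˢ C) (fun t => t.1 * t.2.1 + t.2.2)
      ≤ (#A * #B * #C) ^ 2 + Fintype.card F ^ 2 * (#A * #B * #C) := by
  obtain ⟨ψ, hψ⟩ : ∃ ψ : AddChar F ℂ, ψ.IsPrimitive :=
    ⟨_, AddChar.FiniteField.primitiveChar_to_Complex_isPrimitive F⟩
  set q := Fintype.card F
  set S : F → ℂ := fun b => ∑ a ∈ A, ∑ x ∈ B, ψ (b * (a * x))
  set g : F → ℂ := fun b => ∑ y ∈ C, ψ (b * y)
  have hfactor (b : F) :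
      ∑ t ∈ A ×ˢ B ×ˢ C, ψ (b * (t.1 * t.2.1 + t.2.2)) = S b * g b := by
    simp only [S, g, sum_product, sum_mul, mul_add, AddChar.map_add_eq_mul, ← mul_sum]
  have hzero : ‖S 0 * g 0‖ ^ 2 = ((#A * #B * #C : ℕ) : ℝ) ^ 2 := by
    simp [S, g, mul_assoc]
  have hnonzero : ∑ b ∈ univ.erase 0, ‖S b * g b‖ ^ 2 ≤ ((q ^ 2 * (#A * #B * #C) : ℕ) : ℝ) :=
    calc ∑ b ∈ univ.erase 0, ‖S b * g b‖ ^ 2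
        ≤ ∑ b ∈ univ.erase 0, #A * (q * #B) * ‖g b‖ ^ 2 := by
          refine sum_le_sum fun b hb => ?_
          rw [norm_mul, mul_pow]
          gcongr
          exact AddChar.norm_sq_sum_sum_mulShift_le hψ (ne_of_mem_erase hb).isUnit A B
      _ ≤ #A * (q * #B) * ∑ b, ‖g b‖ ^ 2 := by
          rw [← mul_sum]
          gcongr
          exact subset_univ _
      _ = ((q ^ 2 * (#A * #B * #C) : ℕ) : ℝ) := by
          rw [AddChar.sum_norm_sq_sum_mulShift_id hψ]
          push_cast
          ring
  suffices ((q * collisionCount (A ×ˢ B ×ˢ C) (fun t => t.1 * t.2.1 + t.2.2) : ℕ) : ℝ)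
      ≤ ((#A * #B * #C : ℕ) : ℝ) ^ 2 + ((q ^ 2 * (#A * #B * #C) : ℕ) : ℝ) by
    exact_mod_cast this
  rw [Nat.cast_mul, ← AddChar.sum_norm_sq_sum_mulShift hψ, ← add_sum_erase _ _ (mem_univ 0)]
  simp only [hfactor]
  rw [hzero]
  exact add_le_add le_rfl hnonzero

lemma card_mul_card_pow_three_le (A : Finset F) :
    Fintype.card F * #A ^ 3
      ≤ #((A ×ˢ A ×ˢ A).image fun t => t.1 * t.2.1 + t.2.2) * (#A ^ 3 + Fintype.card F ^ 2) := by
  set q := Fintype.card F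
  set v : F × F × F → F := fun t => t.1 * t.2.1 + t.2.2
  set E := collisionCount (A ×ˢ A ×ˢ A) v
  set s := #((A ×ˢ A ×ˢ A).image v)
  have hcube : #(A ×ˢ A ×ˢ A) = #A ^ 3 := by rw [card_product, card_product]; ring
  have hCS : (#A ^ 3) ^ 2 ≤ s * E := hcube ▸ card_sq_le_card_image_mul_collisionCount _ v
  have hE : q * E ≤ (#A ^ 3) ^ 2 + q ^ 2 * #A ^ 3 :=
    calc q * E ≤ (#A * #A * #A) ^ 2 + q ^ 2 * (#A * #A * #A) := card_mul_collisionCount_le A A A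
      _ = (#A ^ 3) ^ 2 + q ^ 2 * #A ^ 3 := by ring
  rcases (#A ^ 3).eq_zero_or_pos with h0 | hpos
  · simp [h0]
  refine Nat.le_of_mul_le_mul_left ?_ hpos
  calc #A ^ 3 * (q * #A ^ 3) = q * (#A ^ 3) ^ 2 := by ring
    _ ≤ q * (s * E) := Nat.mul_le_mul_left q hCS
    _ = s * (q * E) := by ring
    _ ≤ s * ((#A ^ 3) ^ 2 + q ^ 2 * #A ^ 3) := Nat.mul_le_mul_left s hE
    _ = #A ^ 3 * (s * (#A ^ 3 + q ^ 2)) := by ring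

end FiniteField

lemma card_le_card_image_mul_add {R : Type*} [Mul R] [Add R] [IsLeftCancelAdd R] [DecidableEq R]
    {A : Finset R} (hA : A.Nonempty) :
    #A ≤ #((A ×ˢ A ×ˢ A).image fun t => t.1 * t.2.1 + t.2.2) := by
  obtain ⟨a, ha⟩ := hA
  refine card_le_card_of_injOn (fun y => a * a + y) (fun y hy => ?_) fun _ _ _ _ => add_left_cancel
  exact mem_image.2 ⟨(a, a, y), mem_product.2 ⟨ha, mem_product.2 ⟨ha, hy⟩⟩, rfl⟩

open Real in
lemma min_le_two_mul_of_mul_pow_three_le {q k s : ℝ} (hq : 0 < q) (hk : 0 ≤ k) (hks : k ≤ s)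
    (h : q * k ^ 3 ≤ s * (k ^ 3 + q ^ 2)) : min q (k ^ 2 / √q) ≤ 2 * s := by
  set u := √q
  have hu : u ^ 2 = q := sq_sqrt hq.le
  have hu0 : 0 < u := sqrt_pos.2 hq
  rcases le_or_gt k u with hku | huk
  · calc min q (k ^ 2 / u) ≤ k ^ 2 / u := min_le_right _ _
      _ ≤ k := by rw [div_le_iff₀ hu0]; nlinarith
      _ ≤ 2 * s := by linarith
  set m := min q (k ^ 2 / u)
  have hcube : m * k ^ 3 ≤ q * k ^ 3 := by gcongr; exact min_le_left _ _
  have hsquare : m * q ^ 2 ≤ q * k ^ 3 :=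
    calc m * q ^ 2 ≤ k ^ 2 / u * q ^ 2 := by gcongr; exact min_le_right _ _
      _ = k ^ 2 * u ^ 3 := by rw [← hu]; field_simp
      _ = k ^ 2 * u * u ^ 2 := by ring
      _ ≤ k ^ 2 * k * u ^ 2 := by gcongr
      _ = q * k ^ 3 := by rw [hu]; ring
  refine le_of_mul_le_mul_right ?_ (by positivity : 0 < k ^ 3 + q ^ 2)
  linarith

open Real in
lemma le_sq_div_sqrt_of_rpow_le {q k : ℝ} (hq : 0 < q) (h : q ^ (3 / 4 : ℝ) ≤ k) :
    q ≤ k ^ 2 / √q := by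
  rw [le_div_iff₀ (sqrt_pos.2 hq)]
  calc q * √q = q ^ (1 + 1 / 2 : ℝ) := by rw [rpow_add hq, rpow_one, sqrt_eq_rpow]
    _ = (q ^ (3 / 4 : ℝ)) ^ 2 := by rw [← rpow_mul_natCast hq.le]; norm_num
    _ ≤ k ^ 2 := by gcongr

theorem AA_plus_A_bound :
    ∃ c : ℝ, 0 < c ∧
      ∀ (F : Type) (_ : Field F) (_ : Fintype F) (_ : DecidableEq F)
        (A : Finset F), A.Nonempty →
        (c * min (Fintype.card F : ℝ)
            ((A.card : ℝ) ^ 2 / Real.sqrt (Fintype.card F : ℝ)) ≤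
          (((A ×ˢ A ×ˢ A).image (fun t : F × F × F => t.1 * t.2.1 + t.2.2)).card : ℝ)) ∧
        ((Fintype.card F : ℝ) ^ ((3 : ℝ) / 4) ≤ (A.card : ℝ) →
          c * (Fintype.card F : ℝ) ≤
            (((A ×ˢ A ×ˢ A).image (fun t : F × F × F => t.1 * t.2.1 + t.2.2)).card : ℝ)) := by
  refine ⟨1 / 2, by norm_num, fun F _ _ _ A hA => ?_⟩
  have hq : (0 : ℝ) < Fintype.card F := by exact_mod_cast Fintype.card_pos
  set s := #((A ×ˢ A ×ˢ A).image fun t : F × F × F => t.1 * t.2.1 + t.2.2)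
  have hks : (#A : ℝ) ≤ s := by exact_mod_cast card_le_card_image_mul_add hA
  have hestimate : (Fintype.card F : ℝ) * #A ^ 3 ≤ s * (#A ^ 3 + Fintype.card F ^ 2) := by
    exact_mod_cast card_mul_card_pow_three_le A
  have hmain := min_le_two_mul_of_mul_pow_three_le hq (Nat.cast_nonneg #A) hks hestimate
  refine ⟨by linarith, fun hlarge => ?_⟩
  rw [min_eq_left (le_sq_div_sqrt_of_rpow_le hq hlarge)] at hmain
  linarith
end

section
/- Let q = p^l be a prime power and A ⊆ 𝔽_q with |A| ≥ q^{3/4}. Then there is an absolute constant c > 0 such that |{a₁a₂ + a₃ : aᵢ ∈ A}| ≥ c·q and |{a₁(a₂ + a₃) : aᵢ ∈ A}| ≥ c·q. -/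
/-!
Let `E` count the pairs `(t, u) ∈ T × T` with `f t = f u`. Cauchy–Schwarz over the fibres gives
`|T|² ≤ |f(T)| E`, and Parseval gives `q E = ∑_ψ |∑_{t ∈ T} ψ (f t)|²`, in which the trivial
character contributes `|T|²`. Hence `|f(T)| ≥ q / 2` once the nontrivial characters contribute
at most `|T|²`.

For `T = A³` and `ψ ≠ 1`, the sum for `ab + c` factors as `(∑_{a,b} ψ(ab)) · ∑_c ψ(c)` and the
sum for `a(b + c)` equals `∑_a (∑_b ψ(ab))²`. As `a ↦ ψ(a ·)` runs through all characters of
`𝔽_q`, `∑_a |∑_b ψ(ab)|² = q|A|`, which bounds the nontrivial contributions by `q²|A|³` and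
`q³|A|²` respectively; both are at most `|A|⁶` when `|A| ≥ q^{3/4}`.
-/

open Finset

section Collisions

variable {ι α : Type*} [DecidableEq α]

def collisions (T : Finset ι) (f : ι → α) : ℕ := #{p ∈ T ×ˢ T | f p.1 = f p.2}

lemma collisions_eq_sum_ite (T : Finset ι) (f : ι → α) :
    collisions T f = ∑ t ∈ T, ∑ u ∈ T, if f t = f u then 1 else 0 := by
  rw [collisions, card_filter, sum_product]

lemma collisions_eq_sum_card_fiber_sq (T : Finset ι) (f : ι → α) :
    collisions T f = ∑ x ∈ T.image f, #{t ∈ T | f t = x} ^ 2 := by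
  rw [collisions_eq_sum_ite, ← sum_fiberwise_of_maps_to fun t ht => mem_image_of_mem f ht]
  refine sum_congr rfl fun x _ => ?_
  rw [sq, card_eq_sum_ones, sum_mul, one_mul, sum_filter, sum_filter]
  refine sum_congr rfl fun t _ => ?_
  split_ifs with ht
  · simp only [sum_filter, ht, eq_comm]
  · rfl

lemma sq_card_le_card_image_mul_collisions (T : Finset ι) (f : ι → α) :
    #T ^ 2 ≤ #(T.image f) * collisions T f := by
  rw [collisions_eq_sum_card_fiber_sq, card_eq_sum_card_image f T]
  exact sq_sum_le_card_mul_sum_sq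

end Collisions

section Characters

variable {G ι : Type*} [AddCommGroup G] [Fintype G] [DecidableEq G]

lemma sum_norm_sq_sum_addChar_eq_card_mul_collisions (T : Finset ι) (f : ι → G) :
    ∑ ψ : AddChar G ℂ, ‖∑ t ∈ T, ψ (f t)‖ ^ 2 = Fintype.card G * collisions T f := by
  have h : ∀ ψ : AddChar G ℂ, (‖∑ t ∈ T, ψ (f t)‖ ^ 2 : ℂ) = ∑ t ∈ T, ∑ u ∈ T, ψ (f t - f u) := by
    intro ψ
    rw [← Complex.mul_conj', map_sum, sum_mul_sum]
    simp_rw [← AddChar.map_neg_eq_conj, ← AddChar.map_add_eq_mul, sub_eq_add_neg]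
  apply Complex.ofReal_injective
  push_cast
  simp_rw [h, collisions_eq_sum_ite, sum_comm (s := univ), AddChar.sum_apply_eq_ite, sub_eq_zero]
  push_cast
  simp_rw [mul_sum, mul_ite, mul_one, mul_zero]

lemma sum_norm_sq_sum_addChar_eq_card_mul_card (A : Finset G) :
    ∑ ψ : AddChar G ℂ, ‖∑ a ∈ A, ψ a‖ ^ 2 = Fintype.card G * #A := by
  rw [← diag_card A, diag_eq_filter]
  exact sum_norm_sq_sum_addChar_eq_card_mul_collisions A id

theorem card_le_two_mul_card_image_of_sum_erase_le (T : Finset ι) (f : ι → G) (hT : T.Nonempty)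
    (h : ∑ ψ ∈ univ.erase (1 : AddChar G ℂ), ‖∑ t ∈ T, ψ (f t)‖ ^ 2 ≤ #T ^ 2) :
    Fintype.card G ≤ 2 * #(T.image f) := by
  have hparseval := sum_norm_sq_sum_addChar_eq_card_mul_collisions T f
  rw [← add_sum_erase _ _ (mem_univ 1)] at hparseval
  have htrivial : ‖∑ t ∈ T, (1 : AddChar G ℂ) (f t)‖ ^ 2 = #T ^ 2 := by simp
  have hcs : (#T ^ 2 : ℝ) ≤ #(T.image f) * collisions T f := by
    exact_mod_cast sq_card_le_card_image_mul_collisions T f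
  have hT' : (0 : ℝ) < #T ^ 2 := by positivity
  suffices (Fintype.card G : ℝ) * #T ^ 2 ≤ 2 * #(T.image f) * #T ^ 2 by
    exact_mod_cast le_of_mul_le_mul_right this hT'
  calc (Fintype.card G : ℝ) * #T ^ 2 ≤ Fintype.card G * (#(T.image f) * collisions T f) := by
        gcongr
    _ = #(T.image f) * (Fintype.card G * collisions T f) := by ring
    _ ≤ #(T.image f) * (2 * #T ^ 2) := by
        refine mul_le_mul_of_nonneg_left ?_ (by positivity)
        linarith
    _ = 2 * #(T.image f) * #T ^ 2 := by ring

end Characters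

section TripleSums

variable {R : Type*} [Semiring R]

lemma sum_affine_eq (ψ : AddChar R ℂ) (A : Finset R) :
    ∑ t ∈ A ×ˢ A ×ˢ A, ψ (t.1 * t.2.1 + t.2.2) = (∑ a ∈ A, ∑ b ∈ A, ψ (a * b)) * ∑ c ∈ A, ψ c := by
  simp_rw [sum_product, sum_mul, mul_sum, AddChar.map_add_eq_mul]

lemma sum_mul_add_eq (ψ : AddChar R ℂ) (A : Finset R) :
    ∑ t ∈ A ×ˢ A ×ˢ A, ψ (t.1 * (t.2.1 + t.2.2)) = ∑ a ∈ A, (∑ b ∈ A, ψ (a * b)) ^ 2 := by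
  simp_rw [sum_product, sq, sum_mul_sum, mul_add, AddChar.map_add_eq_mul]

end TripleSums

section FiniteField

variable {F : Type*} [Field F] [Fintype F] [DecidableEq F] {ψ : AddChar F ℂ}

lemma sum_norm_sq_sum_mul_eq (hψ : ψ ≠ 1) (A : Finset F) :
    ∑ a : F, ‖∑ b ∈ A, ψ (a * b)‖ ^ 2 = Fintype.card F * #A := by
  have hbij : Function.Bijective ψ.mulShift :=
    (Fintype.bijective_iff_injective_and_card _).2
      ⟨AddChar.to_mulShift_inj_of_isPrimitive (.of_ne_one hψ), AddChar.card_eq.symm⟩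
  simp_rw [← AddChar.mulShift_apply]
  rw [hbij.sum_comp (fun φ => ‖∑ b ∈ A, φ b‖ ^ 2), sum_norm_sq_sum_addChar_eq_card_mul_card]

lemma sum_norm_sq_sum_mul_le (hψ : ψ ≠ 1) (A : Finset F) :
    ∑ a ∈ A, ‖∑ b ∈ A, ψ (a * b)‖ ^ 2 ≤ Fintype.card F * #A :=
  (sum_le_univ_sum_of_nonneg fun _ => by positivity).trans_eq (sum_norm_sq_sum_mul_eq hψ A)

lemma norm_sq_sum_sum_mul_le (hψ : ψ ≠ 1) (A : Finset F) :
    ‖∑ a ∈ A, ∑ b ∈ A, ψ (a * b)‖ ^ 2 ≤ Fintype.card F * #A ^ 2 :=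
  calc ‖∑ a ∈ A, ∑ b ∈ A, ψ (a * b)‖ ^ 2 ≤ (∑ a ∈ A, ‖∑ b ∈ A, ψ (a * b)‖) ^ 2 := by
        gcongr; exact norm_sum_le _ _
    _ ≤ #A * ∑ a ∈ A, ‖∑ b ∈ A, ψ (a * b)‖ ^ 2 := sq_sum_le_card_mul_sum_sq
    _ ≤ #A * (Fintype.card F * #A) := by gcongr; exact sum_norm_sq_sum_mul_le hψ A
    _ = Fintype.card F * #A ^ 2 := by ring

lemma sum_erase_norm_sq_sum_affine_le (A : Finset F) :
    ∑ ψ ∈ univ.erase (1 : AddChar F ℂ), ‖∑ t ∈ A ×ˢ A ×ˢ A, ψ (t.1 * t.2.1 + t.2.2)‖ ^ 2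
      ≤ Fintype.card F ^ 2 * #A ^ 3 :=
  calc _ ≤ ∑ ψ ∈ univ.erase (1 : AddChar F ℂ), Fintype.card F * #A ^ 2 * ‖∑ c ∈ A, ψ c‖ ^ 2 := by
        refine sum_le_sum fun ψ hψ => ?_
        rw [sum_affine_eq, norm_mul, mul_pow]
        gcongr
        exact norm_sq_sum_sum_mul_le (ne_of_mem_erase hψ) A
    _ ≤ ∑ ψ : AddChar F ℂ, Fintype.card F * #A ^ 2 * ‖∑ c ∈ A, ψ c‖ ^ 2 :=
        sum_le_univ_sum_of_nonneg fun _ => by positivity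
    _ = Fintype.card F ^ 2 * #A ^ 3 := by
        rw [← mul_sum, sum_norm_sq_sum_addChar_eq_card_mul_card]; ring

lemma sum_erase_norm_sq_sum_mul_add_le (A : Finset F) :
    ∑ ψ ∈ univ.erase (1 : AddChar F ℂ), ‖∑ t ∈ A ×ˢ A ×ˢ A, ψ (t.1 * (t.2.1 + t.2.2))‖ ^ 2
      ≤ Fintype.card F ^ 3 * #A ^ 2 :=
  calc _ ≤ ∑ _ψ ∈ univ.erase (1 : AddChar F ℂ), ((Fintype.card F : ℝ) * #A) ^ 2 := by
        refine sum_le_sum fun ψ hψ => ?_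
        rw [sum_mul_add_eq]
        gcongr
        calc _ ≤ ∑ a ∈ A, ‖(∑ b ∈ A, ψ (a * b)) ^ 2‖ := norm_sum_le _ _
          _ = ∑ a ∈ A, ‖∑ b ∈ A, ψ (a * b)‖ ^ 2 := by simp_rw [norm_pow]
          _ ≤ _ := sum_norm_sq_sum_mul_le (ne_of_mem_erase hψ) A
    _ ≤ ∑ _ψ : AddChar F ℂ, ((Fintype.card F : ℝ) * #A) ^ 2 :=
        sum_le_univ_sum_of_nonneg fun _ => by positivity
    _ = Fintype.card F ^ 3 * #A ^ 2 := by
        rw [sum_const, card_univ, AddChar.card_eq, nsmul_eq_mul]; ring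

theorem card_le_two_mul_card_image_affine {A : Finset F} (h : Fintype.card F ^ 2 ≤ #A ^ 3) :
    Fintype.card F ≤ 2 * #((A ×ˢ A ×ˢ A).image fun t => t.1 * t.2.1 + t.2.2) := by
  have hA : A.Nonempty :=
    card_pos.1 <| Nat.pos_of_ne_zero fun h0 => by simp [h0, Fintype.card_ne_zero] at h
  refine card_le_two_mul_card_image_of_sum_erase_le _ _ (hA.product (hA.product hA)) ?_
  calc _ ≤ (Fintype.card F : ℝ) ^ 2 * #A ^ 3 := sum_erase_norm_sq_sum_affine_le A
    _ ≤ #A ^ 3 * #A ^ 3 := by gcongr; exact_mod_cast h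
    _ = #(A ×ˢ A ×ˢ A) ^ 2 := by rw [card_product, card_product]; push_cast; ring

theorem card_le_two_mul_card_image_mul_add {A : Finset F} (h : Fintype.card F ^ 3 ≤ #A ^ 4) :
    Fintype.card F ≤ 2 * #((A ×ˢ A ×ˢ A).image fun t => t.1 * (t.2.1 + t.2.2)) := by
  have hA : A.Nonempty :=
    card_pos.1 <| Nat.pos_of_ne_zero fun h0 => by simp [h0, Fintype.card_ne_zero] at h
  refine card_le_two_mul_card_image_of_sum_erase_le _ _ (hA.product (hA.product hA)) ?_
  calc _ ≤ (Fintype.card F : ℝ) ^ 3 * #A ^ 2 := sum_erase_norm_sq_sum_mul_add_le A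
    _ ≤ #A ^ 4 * #A ^ 2 := by gcongr; exact_mod_cast h
    _ = #(A ×ˢ A ×ˢ A) ^ 2 := by rw [card_product, card_product]; push_cast; ring

end FiniteField

theorem main_corollary :
    ∃ c : ℝ, 0 < c ∧
      ∀ (F : Type) (_ : Field F) (_ : Fintype F) (_ : DecidableEq F)
        (A : Finset F),
        (Fintype.card F : ℝ) ^ ((3 : ℝ) / 4) ≤ (A.card : ℝ) →
        c * (Fintype.card F : ℝ) ≤
            (((A ×ˢ A ×ˢ A).image (fun t : F × F × F => t.1 * t.2.1 + t.2.2)).card : ℝ) ∧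
        c * (Fintype.card F : ℝ) ≤
            (((A ×ˢ A ×ˢ A).image (fun t : F × F × F => t.1 * (t.2.1 + t.2.2))).card : ℝ) := by
  refine ⟨1 / 2, by norm_num, fun F _ _ _ A hA => ?_⟩
  set q := Fintype.card F
  have h3 : q ^ 3 ≤ #A ^ 4 := by
    have : (q : ℝ) ^ 3 ≤ (#A : ℝ) ^ 4 :=
      calc (q : ℝ) ^ 3 = ((q : ℝ) ^ ((3 : ℝ) / 4)) ^ 4 := by
            rw [← Real.rpow_mul_natCast (Nat.cast_nonneg q)]; norm_num
        _ ≤ (#A : ℝ) ^ 4 := by gcongr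
    exact_mod_cast this
  have h2 : q ^ 2 ≤ #A ^ 3 := by
    refine Nat.le_of_mul_le_mul_right ?_ (Fintype.card_pos (α := F))
    calc q ^ 2 * q = q ^ 3 := by ring
      _ ≤ #A ^ 3 * #A := by rw [← pow_succ]; exact h3
      _ ≤ #A ^ 3 * q := Nat.mul_le_mul_left _ (card_le_univ A)
  have haffine := Nat.cast_le (α := ℝ) |>.2 (card_le_two_mul_card_image_affine h2)
  have hmul_add := Nat.cast_le (α := ℝ) |>.2 (card_le_two_mul_card_image_mul_add h3)
  push_cast at haffine hmul_add
  constructor <;> linarith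
end
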